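/- For any complex numbers $z_n$ indexed by integers and any positive integer $Q$, and real numbers $a < b$, one has $\left|\sum_{a<n<b} z_n\right|^2 \le \left(1+\frac{b-a}{Q}\right)\sum_{|q|<Q}\left(1-\frac{|q|}{Q}\right)\sum_{\substack{a<n<b\\ a<n+q<b}} z_{n+q}\overline{z_n}$ (where in particular the right-hand side is a nonnegative real). -/

import Mathlib

open Finset ComplexConjugate

/-!
Put `c := z · 1_{(a,b)}` and `w m := ∑_{0 ≤ h < Q} c (m + h)`. Summing `w` over all `m` counts
every `c n` exactly `Q` times, so `Q ∑ z_n = ∑_m w m`. Expanding `|w m|²` and substituting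
`n = m + h₂` gives `∑_m |w m|² = ∑_{h₁, h₂} ∑_n c (n + h₁ - h₂) conj (c n) = Q R`, the weight
`Q - |q|` being the number of pairs `(h₁, h₂)` with `h₁ - h₂ = q`; in particular `R ≥ 0`.
Finally `w` lives on fewer than `b - a + Q` integers, so Cauchy–Schwarz gives
`Q² |∑ z_n|² ≤ (b - a + Q) Q R`.
-/

section Shifts

variable {G M 𝕜 : Type*} [AddCommGroup G]

theorem finsum_add_right_eq [AddCommMonoid M] (c : G → M) (h : G) :
    ∑ᶠ n, c (n + h) = ∑ᶠ n, c n :=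
  finsum_comp_equiv (Equiv.addRight h)

theorem Function.HasFiniteSupport.comp_add_right [Zero M] {c : G → M}
    (hc : c.HasFiniteSupport) (h : G) : (fun n => c (n + h)).HasFiniteSupport :=
  hc.fun_comp_of_injective (add_left_injective h)

theorem finsum_sum_shift [AddCommMonoid M] {c : G → M} (hc : c.HasFiniteSupport)
    (H : Finset G) : ∑ᶠ m, ∑ h ∈ H, c (m + h) = #H • ∑ᶠ n, c n := by
  rw [finsum_sum_comm _ _ fun h _ => hc.comp_add_right h]
  simp only [finsum_add_right_eq, sum_const]

theorem ofReal_finsum_norm_sq_sum_shift [RCLike 𝕜] {c : G → 𝕜} (hc : c.HasFiniteSupport)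
    (H : Finset G) :
    ((∑ᶠ m, ‖∑ h ∈ H, c (m + h)‖ ^ 2 : ℝ) : 𝕜)
      = ∑ p ∈ H ×ˢ H, ∑ᶠ n, c (n + (p.1 - p.2)) * conj (c n) := by
  have hsq : (fun m => ‖∑ h ∈ H, c (m + h)‖ ^ 2).HasFiniteSupport :=
    (Function.HasFiniteSupport.sum (fun h => hc.comp_add_right h) H).fun_comp
      (g := fun x => ‖x‖ ^ 2) (by simp)
  have hexpand (m : G) : ((‖∑ h ∈ H, c (m + h)‖ ^ 2 : ℝ) : 𝕜)
      = ∑ p ∈ H ×ˢ H, c (m + p.1) * conj (c (m + p.2)) := by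
    rw [RCLike.ofReal_pow, ← RCLike.mul_conj, map_sum, sum_mul_sum, sum_product]
  rw [← RCLike.ofRealAm_coe, map_finsum _ hsq]
  simp only [RCLike.ofRealAm_coe]
  rw [finsum_congr hexpand,
    finsum_sum_comm _ _ fun p _ => ((hc.comp_add_right p.2).fun_comp (map_zero conj)).mul_right _]
  refine sum_congr rfl fun p _ => ?_
  rw [← finsum_add_right_eq (fun n => c (n + (p.1 - p.2)) * conj (c n)) p.2]
  simp only [add_add_sub_cancel]

end Shifts

theorem norm_finsum_sq_le_card_mul {ι E : Type*} [SeminormedAddCommGroup E] {w : ι → E}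
    {S : Finset ι} (hw : w.support ⊆ S) : ‖∑ᶠ i, w i‖ ^ 2 ≤ #S * ∑ᶠ i, ‖w i‖ ^ 2 := by
  have hsq : (fun i => ‖w i‖ ^ 2).support ⊆ S := fun i hi => hw fun h => hi (by simp [h])
  rw [finsum_eq_sum_of_support_subset _ hw, finsum_eq_sum_of_support_subset _ hsq]
  calc ‖∑ i ∈ S, w i‖ ^ 2 ≤ (∑ i ∈ S, ‖w i‖) ^ 2 := by gcongr; exact norm_sum_le S w
    _ ≤ #S * ∑ i ∈ S, ‖w i‖ ^ 2 := sq_sum_le_card_mul_sum_sq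

namespace Int

theorem card_filter_Ico_product_sub_eq (Q : ℕ) {q : ℤ} (hq : q.natAbs ≤ Q) :
    #{p ∈ Ico 0 (Q : ℤ) ×ˢ Ico 0 (Q : ℤ) | p.1 - p.2 = q} = Q - q.natAbs := by
  have hinj : Function.Injective fun n : ℤ => (n, n - q) := fun m n h => congrArg Prod.fst h
  have hfiber : {p ∈ Ico 0 (Q : ℤ) ×ˢ Ico 0 (Q : ℤ) | p.1 - p.2 = q}
      = (Ico (max 0 q) (min Q (Q + q))).image fun n => (n, n - q) := by
    ext ⟨m, n⟩
    simp only [mem_filter, mem_product, mem_Ico, mem_image, Prod.mk.injEq]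
    constructor
    · rintro ⟨⟨⟨_, _⟩, _, _⟩, rfl⟩
      exact ⟨m, by omega, rfl, by ring⟩
    · rintro ⟨k, hk, rfl, rfl⟩
      omega
  rw [hfiber, card_image_of_injective _ hinj, card_Ico]
  omega

theorem sum_Ico_product_sub {M : Type*} [AddCommMonoid M] (Q : ℕ) (F : ℤ → M) :
    ∑ p ∈ Ico 0 (Q : ℤ) ×ˢ Ico 0 (Q : ℤ), F (p.1 - p.2)
      = ∑ q ∈ Icc (-(Q : ℤ) + 1) (Q - 1), (Q - q.natAbs) • F q := by
  rw [← sum_fiberwise_of_maps_to' (g := fun p : ℤ × ℤ => p.1 - p.2)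
    (t := Icc (-(Q : ℤ) + 1) (Q - 1))
    (fun p hp => by simp only [mem_product, mem_Ico] at hp; simp only [mem_Icc]; omega)]
  refine sum_congr rfl fun q hq => ?_
  rw [sum_const, card_filter_Ico_product_sub_eq Q (by simp only [mem_Icc] at hq; omega)]

theorem ofReal_finsum_norm_sq_sum_Ico_shift {𝕜 : Type*} [RCLike 𝕜] {c : ℤ → 𝕜}
    (hc : c.HasFiniteSupport) (Q : ℕ) :
    ((∑ᶠ m, ‖∑ h ∈ Ico 0 (Q : ℤ), c (m + h)‖ ^ 2 : ℝ) : 𝕜)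
      = ∑ q ∈ Icc (-(Q : ℤ) + 1) (Q - 1), (Q - q.natAbs) • ∑ᶠ n, c (n + q) * conj (c n) := by
  rw [ofReal_finsum_norm_sq_sum_shift hc,
    sum_Ico_product_sub Q fun q => ∑ᶠ n, c (n + q) * conj (c n)]

theorem natCast_sub_natAbs_eq_mul {Q : ℕ} (hQ : Q ≠ 0) {q : ℤ} (hq : q.natAbs ≤ Q) :
    ((Q - q.natAbs : ℕ) : ℂ) = Q * (1 - (|q| : ℝ) / Q) := by
  rw [Nat.cast_sub hq, mul_sub, mul_one, mul_div_cancel₀ _ (Nat.cast_ne_zero.2 hQ),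
    ← cast_abs, Complex.ofReal_intCast, Nat.cast_natAbs]

section IntegersInInterval

variable {x y : ℝ}

theorem mem_Icc_floor_ceil_of_mem_Ioo {n : ℤ} (hn : x < n ∧ n < y) : n ∈ Icc ⌊x⌋ ⌈y⌉ :=
  mem_Icc.2 ⟨floor_le_iff.2 (by linarith), le_ceil_iff.2 (by linarith)⟩

theorem card_filter_Icc_floor_ceil_lt (hxy : x ≤ y) :
    (#((Icc ⌊x⌋ ⌈y⌉).filter (fun n : ℤ => x < n ∧ n < y)) : ℝ) < y - x + 1 := by
  have hsub : (Icc ⌊x⌋ ⌈y⌉).filter (fun n : ℤ => x < n ∧ n < y) ⊆ Ioo ⌊x⌋ ⌈y⌉ := fun n hn =>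
    mem_Ioo.2 ⟨floor_lt.2 (mem_filter.1 hn).2.1, lt_ceil.2 (mem_filter.1 hn).2.2⟩
  have hcard := card_le_card hsub
  rw [card_Ioo] at hcard
  have hfloor := sub_one_lt_floor x
  have hceil := ceil_lt_add_one y
  have hIoo : ((⌈y⌉ - ⌊x⌋ - 1).toNat : ℝ) < y - x + 1 := by
    rcases le_or_gt 0 (⌈y⌉ - ⌊x⌋ - 1) with h | h
    · rw [← cast_natCast, toNat_of_nonneg h]; push_cast; linarith
    · rw [toNat_of_nonpos h.le]; push_cast; linarith
  exact lt_of_le_of_lt (by exact_mod_cast hcard) hIoo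

theorem hasFiniteSupport_indicator_Ioo {M : Type*} [Zero M] (z : ℤ → M) :
    ({n : ℤ | x < n ∧ n < y}.indicator z).HasFiniteSupport :=
  ((Icc ⌊x⌋ ⌈y⌉).filter (fun n : ℤ => x < n ∧ n < y)).finite_toSet.subset fun n hn =>
    have hn : x < n ∧ n < y := Set.mem_of_indicator_ne_zero (s := {n : ℤ | x < n ∧ n < y}) hn
    mem_filter.2 ⟨mem_Icc_floor_ceil_of_mem_Ioo hn, hn⟩

theorem sum_filter_Icc_floor_ceil_eq_finsum {M : Type*} [AddCommMonoid M] {P : ℤ → Prop}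
    [DecidablePred P] (hP : ∀ n, P n → x < n ∧ n < y) (f : ℤ → M) :
    ∑ n ∈ (Icc ⌊x⌋ ⌈y⌉).filter P, f n = ∑ᶠ n, if P n then f n else 0 := by
  rw [sum_filter, finsum_eq_sum_of_support_subset]
  intro n hn
  by_cases h : P n
  · exact mem_Icc_floor_ceil_of_mem_Ioo (hP n h)
  · simp [h] at hn

theorem sum_filter_Icc_floor_ceil_eq_finsum_indicator {M : Type*} [AddCommMonoid M]
    (z : ℤ → M) :
    ∑ n ∈ (Icc ⌊x⌋ ⌈y⌉).filter (fun n : ℤ => x < n ∧ n < y), z n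
      = ∑ᶠ n, {n : ℤ | x < n ∧ n < y}.indicator z n := by
  rw [sum_filter_Icc_floor_ceil_eq_finsum (fun _ h => h) z]
  simp only [Set.indicator_apply, Set.mem_ofPred_eq]

theorem sum_filter_Icc_floor_ceil_correlation_eq_finsum {𝕜 : Type*} [RCLike 𝕜] (z : ℤ → 𝕜)
    (q : ℤ) :
    ∑ n ∈ (Icc ⌊x⌋ ⌈y⌉).filter (fun n : ℤ => (x < (n : ℝ) ∧ (n : ℝ) < y) ∧
        (x < ((n : ℝ) + (q : ℝ)) ∧ ((n : ℝ) + (q : ℝ)) < y)), z (n + q) * conj (z n)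
      = ∑ᶠ n, {n : ℤ | x < n ∧ n < y}.indicator z (n + q)
          * conj ({n : ℤ | x < n ∧ n < y}.indicator z n) := by
  rw [sum_filter_Icc_floor_ceil_eq_finsum (fun _ h => h.1)]
  refine finsum_congr fun n => ?_
  simp only [Set.indicator_apply, Set.mem_ofPred_eq, cast_add]
  split_ifs <;> simp_all

theorem support_sum_Ico_shift_indicator_subset {M : Type*} [AddCommMonoid M] (z : ℤ → M)
    (Q : ℕ) :
    (fun m => ∑ h ∈ Ico 0 (Q : ℤ), {n : ℤ | x < n ∧ n < y}.indicator z (m + h)).support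
      ⊆ (Icc ⌊x - Q + 1⌋ ⌈y⌉).filter (fun n : ℤ => x - Q + 1 < n ∧ n < y) := by
  intro m hm
  obtain ⟨h, hh, hzh⟩ := exists_ne_zero_of_sum_ne_zero hm
  have hmh : x < ((m + h : ℤ) : ℝ) ∧ ((m + h : ℤ) : ℝ) < y :=
    Set.mem_of_indicator_ne_zero (s := {n : ℤ | x < n ∧ n < y}) hzh
  rw [mem_Ico] at hh
  have hh0 : (0 : ℝ) ≤ h := by exact_mod_cast hh.1
  have hhQ : (h : ℝ) + 1 ≤ Q := by exact_mod_cast add_one_le_of_lt hh.2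
  push_cast at hmh
  have hm' : x - Q + 1 < m ∧ (m : ℝ) < y := ⟨by linarith, by linarith⟩
  exact mem_filter.2 ⟨mem_Icc_floor_ceil_of_mem_Ioo hm', hm'⟩

end IntegersInInterval

end Int

/-- Weyl differencing inequality. -/
theorem weyl_differencing (z : ℤ → ℂ) (Q : ℕ) (hQ : 0 < Q) (a b : ℝ) (hab : a < b) :
    let R : ℂ := ∑ q ∈ Finset.Icc (-(Q : ℤ) + 1) ((Q : ℤ) - 1),
      (1 - (|q| : ℝ) / Q) * ∑ n ∈ (Finset.Icc ⌊a⌋ ⌈b⌉).filter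
          (fun n : ℤ => (a < (n : ℝ) ∧ (n : ℝ) < b) ∧ (a < ((n : ℝ) + (q : ℝ)) ∧ ((n : ℝ) + (q : ℝ)) < b)),
        z (n + q) * (starRingEnd ℂ) (z n)
    R.im = 0 ∧ 0 ≤ R.re ∧
      ‖∑ n ∈ (Finset.Icc ⌊a⌋ ⌈b⌉).filter (fun n : ℤ => a < (n : ℝ) ∧ (n : ℝ) < b), z n‖ ^ 2
        ≤ (1 + (b - a) / Q) * R.re := by
  intro R
  set c := {n : ℤ | a < n ∧ n < b}.indicator z
  set W := (Icc ⌊a - Q + 1⌋ ⌈b⌉).filter (fun n : ℤ => a - Q + 1 < n ∧ n < b)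
  set N : ℝ := ∑ᶠ m, ‖∑ h ∈ Ico 0 (Q : ℤ), c (m + h)‖ ^ 2
  have hc : c.HasFiniteSupport := Int.hasFiniteSupport_indicator_Ioo z
  have hQ' : (Q : ℝ) ≠ 0 := by positivity
  have hR : R = ((N / Q : ℝ) : ℂ) := by
    have hN : (N : ℂ) = _ := Int.ofReal_finsum_norm_sq_sum_Ico_shift hc Q
    rw [Complex.ofReal_div, Complex.ofReal_natCast, eq_div_iff (by exact_mod_cast hQ'), hN,
      mul_comm, mul_sum]
    refine sum_congr rfl fun q hq => ?_
    rw [mem_Icc] at hq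
    rw [nsmul_eq_mul, Int.natCast_sub_natAbs_eq_mul hQ.ne' (by omega), mul_assoc,
      Int.sum_filter_Icc_floor_ceil_correlation_eq_finsum]
  have hN : 0 ≤ N := finsum_nonneg fun m => by positivity
  have hW : (#W : ℝ) ≤ b - a + Q := by
    have := Int.card_filter_Icc_floor_ceil_lt (x := a - Q + 1) (y := b)
      (by linarith [(by exact_mod_cast hQ : (1 : ℝ) ≤ Q)])
    linarith
  refine ⟨by simp [hR], by simp only [hR, Complex.ofReal_re]; positivity, ?_⟩
  calc _ = ‖∑ᶠ n, c n‖ ^ 2 := by rw [Int.sum_filter_Icc_floor_ceil_eq_finsum_indicator]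
    _ = ‖∑ᶠ m, ∑ h ∈ Ico 0 (Q : ℤ), c (m + h)‖ ^ 2 / Q ^ 2 := by
        rw [finsum_sum_shift hc, Int.card_Ico, sub_zero, Int.toNat_natCast, nsmul_eq_mul,
          norm_mul, Complex.norm_natCast]
        field_simp
    _ ≤ #W * N / Q ^ 2 := by
        gcongr
        exact norm_finsum_sq_le_card_mul (Int.support_sum_Ico_shift_indicator_subset z Q)
    _ ≤ (b - a + Q) * N / Q ^ 2 := by gcongr
    _ = (1 + (b - a) / Q) * R.re := by
        rw [hR, Complex.ofReal_re]; field_simp; ring
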